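/- arXiv:2603.03612 — 6 statements merged into one kernel-verified Lean document; each statement's English description precedes it below -/
import Mathlib

section
/- Let K be a commutative ring, d ≥ 1, N ≥ 1, and for each i ∈ {1,…,N} let πᵢ : {1,…,d} → {1,…,d} be a function and dᵢ ∈ K^d a vector. Then the ordered product ∏_{i=1}^{N} (P(πᵢ)·diag(dᵢ)) (with factors multiplied left to right in order of increasing i) equals P(π₁ ∘ π₂ ∘ ⋯ ∘ π_N) · ∏_{j=1}^{N} diag(dⱼ ∘ σⱼ), where σⱼ := π_{j+1} ∘ π_{j+2} ∘ ⋯ ∘ π_N (and σ_N is the identity function), and dⱼ ∘ σⱼ denotes the vector whose k-th entry is dⱼ(σⱼ(k)). -/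
/-- The column one-hot matrix of a function `π : Fin d → Fin d`:
`P(π)_{i,j} = 1` if `π j = i` and `0` otherwise. -/
def colOneHot {d : ℕ} (K : Type*) [CommRing K] (π : Fin d → Fin d) :
    Matrix (Fin d) (Fin d) K :=
  Matrix.of fun i j => if π j = i then 1 else 0

section colOneHot

variable {d : ℕ} (K : Type*) [CommRing K]

@[simp]
lemma colOneHot_id : colOneHot (d := d) K id = 1 := by
  ext i j
  simp [colOneHot, Matrix.one_apply, eq_comm]

lemma colOneHot_mul_colOneHot (f g : Fin d → Fin d) :
    colOneHot K f * colOneHot K g = colOneHot K (f ∘ g) := by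
  ext i j
  simp only [colOneHot, Matrix.mul_apply, Matrix.of_apply, Function.comp_apply]
  rw [Finset.sum_eq_single (g j)] <;> aesop

lemma diagonal_mul_colOneHot (v : Fin d → K) (f : Fin d → Fin d) :
    Matrix.diagonal v * colOneHot K f = colOneHot K f * Matrix.diagonal (v ∘ f) := by
  ext i j
  simp only [Matrix.diagonal_mul, Matrix.mul_diagonal, colOneHot, Matrix.of_apply,
    Function.comp_apply]
  split <;> simp_all

lemma colOneHot_mul_diagonal_mul_colOneHot (f g : Fin d → Fin d) (v : Fin d → K) :
    colOneHot K f * Matrix.diagonal v * colOneHot K g =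
      colOneHot K (f ∘ g) * Matrix.diagonal (v ∘ g) := by
  rw [mul_assoc, diagonal_mul_colOneHot, ← mul_assoc, colOneHot_mul_colOneHot]

end colOneHot

theorem pd_list_prod_general {d N : ℕ} (K : Type*) [CommRing K]
    (π : Fin N → Fin d → Fin d) (dvec : Fin N → Fin d → K) :
    (List.ofFn fun i => colOneHot K (π i) * Matrix.diagonal (dvec i)).prod =
      colOneHot K ((List.ofFn π).foldr Function.comp id) *
        (List.ofFn fun j : Fin N =>
          Matrix.diagonal
            (dvec j ∘ ((List.ofFn π).drop ((j : ℕ) + 1)).foldr Function.comp id)).prod := by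
  induction N with
  | zero => simp
  | succ N ih =>
    simp only [List.ofFn_succ, List.prod_cons, Fin.val_succ, Fin.val_zero, List.drop_succ_cons,
      List.drop_zero, List.foldr_cons, ih (fun i => π i.succ) (fun i => dvec i.succ)]
    rw [← mul_assoc, colOneHot_mul_diagonal_mul_colOneHot, mul_assoc]

/-- the ordered product `∏_{i=1}^{N} (P(πᵢ)·diag(dᵢ))` equals
`P(π₁ ∘ ⋯ ∘ π_N) · ∏_{j=1}^{N} diag(dⱼ ∘ σⱼ)` where
`σⱼ = π_{j+1} ∘ ⋯ ∘ π_N` (so `σ_N = id`).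
Here `σⱼ` is realized as the right fold of `Function.comp` over the list of the
`πᵢ` with the first `j` elements dropped. -/
theorem pd_list_prod {d N : ℕ} (hd : 1 ≤ d) (hN : 1 ≤ N) (K : Type*) [CommRing K]
    (π : Fin N → Fin d → Fin d) (dvec : Fin N → Fin d → K) :
    (List.ofFn fun i => colOneHot K (π i) * Matrix.diagonal (dvec i)).prod =
      colOneHot K ((List.ofFn π).foldr Function.comp id) *
        (List.ofFn fun j : Fin N =>
          Matrix.diagonal
            (dvec j ∘ ((List.ofFn π).drop ((j : ℕ) + 1)).foldr Function.comp id)).prod :=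
  pd_list_prod_general K π dvec
end

section
/- Let K be a commutative ring, d ≥ 1, dst ∈ {1,…,d}, and c ∈ K^d with c_dst = 0. Set w = 𝟙 (the all-ones vector), a = e_dst, κ = e_dst − c, and λ = 1. Then diag(w) − λ·κ·(a ⊙ κ)ᵀ = U(dst;c), where ⊙ denotes the elementwise (Hadamard) product of vectors. That is, every dot-product overwrite matrix is realizable as a single RWKV-7-style multiplicative transition matrix A(w,a,κ;λ) := diag(w) − λ κ (a ⊙ κ)ᵀ. -/
/-- The dot-product overwrite matrix
`U(dst; c) = I − e_dst e_dstᵀ + c e_dstᵀ`. -/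
def overwrite {d : ℕ} (K : Type*) [CommRing K] (dst : Fin d) (c : Fin d → K) :
    Matrix (Fin d) (Fin d) K :=
  1 - Matrix.vecMulVec (Pi.single dst 1) (Pi.single dst 1)
    + Matrix.vecMulVec c (Pi.single dst 1)

/-- The RWKV-7-style transition matrix `A(w,a,κ;λ) = diag(w) − λ κ (a ⊙ κ)ᵀ`,
where `⊙` is the elementwise (Hadamard) product. -/
def rwkvTransition {d : ℕ} (K : Type*) [CommRing K]
    (w a κ : Fin d → K) (lam : K) : Matrix (Fin d) (Fin d) K :=
  Matrix.diagonal w - lam • Matrix.vecMulVec κ (a * κ)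

theorem Pi.single_one_mul_single_one_sub {ι R : Type*} [DecidableEq ι] [Ring R] (i : ι)
    (c : ι → R) (hc : c i = 0) : Pi.single i 1 * (Pi.single i 1 - c) = Pi.single i (1 : R) := by
  rw [← Pi.single_mul_left, Pi.sub_apply, Pi.single_eq_same, hc, sub_zero, one_mul]

theorem rwkvTransition_one_one {d : ℕ} (K : Type*) [CommRing K] (a κ : Fin d → K) :
    rwkvTransition K (fun _ => 1) a κ 1 = 1 - Matrix.vecMulVec κ (a * κ) := by
  rw [rwkvTransition, one_smul, Matrix.diagonal_one]

theorem rwkvTransition_eq_overwrite_general {d : ℕ} (K : Type*) [CommRing K]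
    (dst : Fin d) (c : Fin d → K) (hc : c dst = 0) :
    rwkvTransition K (fun _ => 1) (Pi.single dst 1) (Pi.single dst 1 - c) 1 =
      overwrite K dst c := by
  rw [rwkvTransition_one_one, Pi.single_one_mul_single_one_sub dst c hc,
    Matrix.sub_vecMulVec, overwrite, sub_sub_eq_add_sub, add_sub_right_comm]

/-- with `w = 𝟙`, `a = e_dst`, `κ = e_dst − c`, `λ = 1`,
the RWKV transition matrix `diag(w) − λ κ (a ⊙ κ)ᵀ` equals `U(dst;c)`. -/
theorem rwkvTransition_eq_overwrite {d : ℕ} (hd : 1 ≤ d) (K : Type*) [CommRing K]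
    (dst : Fin d) (c : Fin d → K) (hc : c dst = 0) :
    rwkvTransition K (fun _ => 1) (Pi.single dst 1) (Pi.single dst 1 - c) 1 =
      overwrite K dst c :=
  rwkvTransition_eq_overwrite_general K dst c hc
end

section
/- Let d ≥ 2 and let src, dst ∈ {1,…,d} with src ≠ dst. Over ℚ, define u := e_src + e_dst and w := e_src + 2·e_dst. Then H(2, u) · H(1/2, e_src) · H(1/3, w) = I + e_src e_dstᵀ. That is, the unit transvection T(src→dst) := I + e_src e_dstᵀ (which, acting on row vectors by right multiplication, performs r_dst ← r_dst + r_src and leaves all other coordinates unchanged) is the product of three multiplicative DeltaNet step matrices. -/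
/-- The multiplicative DeltaNet step matrix `H(β, k) = I − β k kᵀ`. -/
def Hstep {ι : Type*} [Fintype ι] [DecidableEq ι] (K : Type*) [CommRing K]
    (β : K) (k : ι → K) : Matrix ι ι K :=
  1 - β • Matrix.vecMulVec k k

/-!
Only orthonormality of `s = e_src` and `t = e_dst` matters. Each step is the identity minus a
combination of `s sᵀ, s tᵀ, t sᵀ, t tᵀ`, and these multiply by `(a bᵀ)(c eᵀ) = (b ⬝ c) a eᵀ`,
so the product is `1` plus such a combination whose coefficients, rational expressions in
`2, 1/2, 1/3`, vanish except for the one of `s tᵀ`, which is `1`.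
-/

open Matrix

theorem Hstep_mul_Hstep_mul_Hstep_of_orthonormal {ι K : Type*} [Fintype ι] [DecidableEq ι]
    [Field K] (h2 : (2 : K) ≠ 0) (h3 : (3 : K) ≠ 0) {s t : ι → K}
    (hss : s ⬝ᵥ s = 1) (htt : t ⬝ᵥ t = 1) (hst : s ⬝ᵥ t = 0) :
    Hstep K 2 (s + t) * Hstep K (1 / 2) s * Hstep K (1 / 3) (s + (2 : K) • t) =
      1 + vecMulVec s t := by
  have hts : t ⬝ᵥ s = 0 := by rwa [dotProduct_comm]
  simp only [Hstep, sub_mul, mul_sub, one_mul, mul_one, Matrix.smul_mul, Matrix.mul_smul,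
    add_vecMulVec, vecMulVec_add, smul_vecMulVec, vecMulVec_smul, add_mul, mul_add,
    vecMulVec_mul_vecMulVec, hss, htt, hst, hts, smul_add, smul_smul]
  match_scalars <;> field_simp <;> ring

theorem three_Hsteps_eq_transvection_general {d : ℕ} (src dst : Fin d)
    (hne : src ≠ dst) :
    Hstep ℚ 2 ((Pi.single src 1 + Pi.single dst 1 : Fin d → ℚ)) *
      Hstep ℚ (1 / 2) (Pi.single src 1) *
      Hstep ℚ (1 / 3)
        ((Pi.single src 1 + (2 : ℚ) • (Pi.single dst 1 : Fin d → ℚ) : Fin d → ℚ)) =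
    1 + Matrix.vecMulVec (Pi.single src (1 : ℚ)) (Pi.single dst 1) :=
  Hstep_mul_Hstep_mul_Hstep_of_orthonormal two_ne_zero three_ne_zero (by simp) (by simp)
    (by simp [hne.symm])

/-- with `u = e_src + e_dst` and `w = e_src + 2·e_dst`,
`H(2,u) · H(1/2, e_src) · H(1/3, w) = I + e_src e_dstᵀ`, the unit transvection
`T(src → dst)`. -/
theorem three_Hsteps_eq_transvection {d : ℕ} (hd : 2 ≤ d) (src dst : Fin d)
    (hne : src ≠ dst) :
    Hstep ℚ 2 ((Pi.single src 1 + Pi.single dst 1 : Fin d → ℚ)) *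
      Hstep ℚ (1 / 2) (Pi.single src 1) *
      Hstep ℚ (1 / 3)
        ((Pi.single src 1 + (2 : ℚ) • (Pi.single dst 1 : Fin d → ℚ) : Fin d → ℚ)) =
    1 + Matrix.vecMulVec (Pi.single src (1 : ℚ)) (Pi.single dst 1) :=
  three_Hsteps_eq_transvection_general src dst hne
end

section
/- Let d ≥ 3, let src, dst, tmp ∈ {1,…,d} be pairwise distinct indices, and let λ ∈ ℚ. Then there exist scalars β₁, …, β₈ ∈ ℚ and column vectors k₁, …, k₈ ∈ ℚ^d such that for every row vector r ∈ ℚ^{1×d} with r_tmp = 0, the row vector r′ := r · H(β₁,k₁) · H(β₂,k₂) ⋯ H(β₈,k₈) satisfies: r′_dst = r_dst + λ·r_src, r′_j = r_j for every j ≠ dst, and r′_tmp = 0. -/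
/-!
The step `(-1, eᵢ + c eⱼ)` followed by `(1/2, eᵢ)` adds `(c/2) rⱼ` to `rᵢ` and sends `rⱼ` to
`rⱼ + c (rᵢ + c rⱼ)`. Applied with `(i, j, c) = (src, tmp, 1)` it copies `r_src` into the empty
register `tmp`; applied with `(dst, tmp, 2λ)` it then adds `λ r_src` to `r_dst` while filling
`tmp` with garbage, which the projection `H(1, e_tmp)` erases. Three identity steps `H(0, 0)` pad
the program to length 8.
-/

open Matrix Function

section CommRing

variable {ι K : Type*} [Fintype ι] [DecidableEq ι] [CommRing K]

theorem vecMul_Hstep (β : K) (k r : ι → K) : r ᵥ* Hstep K β k = r - (β * (r ⬝ᵥ k)) • k := by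
  rw [Hstep, vecMul_sub, vecMul_one, vecMul_smul, vecMul_vecMulVec, smul_smul]

theorem Hstep_zero_left (k : ι → K) : Hstep K 0 k = 1 := by
  simp [Hstep]

theorem vecMul_Hstep_one_single (r : ι → K) (j : ι) :
    r ᵥ* Hstep K 1 (Pi.single j 1) = update r j 0 := by
  ext l
  rcases eq_or_ne l j with rfl | hl <;> simp [vecMul_Hstep, *]

end CommRing

section Field

variable {ι K : Type*} [Fintype ι] [DecidableEq ι] [Field K] [NeZero (2 : K)]

theorem vecMul_Hstep_neg_one_Hstep_half {i j : ι} (hij : i ≠ j) (c : K) (r : ι → K) :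
    r ᵥ* Hstep K (-1) (Pi.single i 1 + Pi.single j c) ᵥ* Hstep K (1 / 2) (Pi.single i 1) =
      update (update r i (r i + c / 2 * r j)) j (r j + c * (r i + c * r j)) := by
  ext l
  simp only [vecMul_Hstep, dotProduct_add, dotProduct_single, mul_one, Pi.sub_apply, Pi.add_apply,
    Pi.smul_apply, smul_eq_mul]
  rcases eq_or_ne l i with rfl | hli
  · simp only [Pi.single_eq_same, Pi.single_eq_of_ne hij, add_zero, update_of_ne hij, update_self]
    field_simp
    ring
  · rcases eq_or_ne l j with rfl | hlj
    · simp only [Pi.single_eq_same, Pi.single_eq_of_ne hij.symm, zero_add, update_self]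
      ring
    · simp [*]

def scaledAddCoeffs : Fin 8 → K := ![-1, 1 / 2, -1, 1 / 2, 1, 0, 0, 0]

def scaledAddKeys (src dst tmp : ι) (lam : K) : Fin 8 → ι → K :=
  ![Pi.single src 1 + Pi.single tmp 1, Pi.single src 1,
    Pi.single dst 1 + Pi.single tmp (2 * lam), Pi.single dst 1, Pi.single tmp 1, 0, 0, 0]

theorem vecMul_prod_scaledAdd {src dst tmp : ι} (hs : src ≠ tmp) (hd : dst ≠ tmp) (lam : K)
    (r : ι → K) (hr : r tmp = 0) :
    r ᵥ* (List.ofFn fun i => Hstep K (scaledAddCoeffs i) (scaledAddKeys src dst tmp lam i)).prod =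
      update r dst (r dst + lam * r src) := by
  simp only [scaledAddCoeffs, scaledAddKeys, List.ofFn_succ, List.ofFn_zero, List.prod_cons,
    List.prod_nil, cons_val_zero, cons_val_succ, ← vecMul_vecMul, Hstep_zero_left, vecMul_one]
  rw [vecMul_Hstep_neg_one_Hstep_half hs, vecMul_Hstep_neg_one_Hstep_half hd,
    vecMul_Hstep_one_single]
  ext j
  simp only [update_apply]
  split_ifs <;> simp_all [mul_div_cancel_left₀ lam (two_ne_zero (α := K))]

end Field

theorem scaled_add_via_temp_general {d : ℕ} (src dst tmp : Fin d)
    (h₂ : src ≠ tmp) (h₃ : dst ≠ tmp) (lam : ℚ) :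
    ∃ (β : Fin 8 → ℚ) (k : Fin 8 → Fin d → ℚ),
      ∀ r : Fin d → ℚ, r tmp = 0 →
        (Matrix.vecMul r (List.ofFn fun i => Hstep ℚ (β i) (k i)).prod) dst =
            r dst + lam * r src ∧
        (∀ j ≠ dst,
          (Matrix.vecMul r (List.ofFn fun i => Hstep ℚ (β i) (k i)).prod) j = r j) ∧
        (Matrix.vecMul r (List.ofFn fun i => Hstep ℚ (β i) (k i)).prod) tmp = 0 := by
  refine ⟨scaledAddCoeffs, scaledAddKeys src dst tmp lam, fun r hr => ?_⟩
  rw [vecMul_prod_scaledAdd h₂ h₃ lam r hr]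
  exact ⟨update_self .., fun j hj => update_of_ne hj .., by rw [update_of_ne h₃.symm, hr]⟩

/-- scaled add via a temp register.  For pairwise distinct indices
`src, dst, tmp` and any `λ ∈ ℚ`, there is a length-8 sequence of multiplicative
DeltaNet steps whose product maps every row vector `r` with `r_tmp = 0` to `r′`
with `r′_dst = r_dst + λ·r_src`, `r′_j = r_j` for `j ≠ dst`, and `r′_tmp = 0`. -/
theorem scaled_add_via_temp {d : ℕ} (hd : 3 ≤ d) (src dst tmp : Fin d)
    (h₁ : src ≠ dst) (h₂ : src ≠ tmp) (h₃ : dst ≠ tmp) (lam : ℚ) :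
    ∃ (β : Fin 8 → ℚ) (k : Fin 8 → Fin d → ℚ),
      ∀ r : Fin d → ℚ, r tmp = 0 →
        (Matrix.vecMul r (List.ofFn fun i => Hstep ℚ (β i) (k i)).prod) dst =
            r dst + lam * r src ∧
        (∀ j ≠ dst,
          (Matrix.vecMul r (List.ofFn fun i => Hstep ℚ (β i) (k i)).prod) j = r j) ∧
        (Matrix.vecMul r (List.ofFn fun i => Hstep ℚ (β i) (k i)).prod) tmp = 0 :=
  scaled_add_via_temp_general src dst tmp h₂ h₃ lam
end

section
/- Let n ≥ 1 and let P be an n×n matrix over ℚ. Set m := 8n² + 5n + 1. Consider row vectors in dimension 2n+1 written as [x | s | t] with x, s ∈ ℚ^{1×n} and t ∈ ℚ. Then there exist scalars β₁, …, β_m ∈ ℚ and column vectors k₁, …, k_m ∈ ℚ^{2n+1} such that for all x, s ∈ ℚ^{1×n} and all t ∈ ℚ: [x | s | t] · H(β₁,k₁) · H(β₂,k₂) ⋯ H(β_m,k_m) = [xP | xP | 0]. -/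
namespace DeltaNet

open Matrix Function

section CommRing

variable {K : Type*} [CommRing K] {d : Type*} [Fintype d] [DecidableEq d]

theorem vecMul_Hstep (β : K) (k v : d → K) : v ᵥ* Hstep K β k = v - (β * (v ⬝ᵥ k)) • k := by
  rw [Hstep, vecMul_sub, vecMul_one, vecMul_smul, vecMul_vecMulVec, smul_smul]

def stepsMatrix (l : List (K × (d → K))) : Matrix d d K :=
  (l.map fun p => Hstep K p.1 p.2).prod

@[simp]
theorem vecMul_stepsMatrix_nil (v : d → K) : v ᵥ* stepsMatrix [] = v := by
  simp [stepsMatrix]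

theorem vecMul_stepsMatrix_cons (p : K × (d → K)) (l : List (K × (d → K))) (v : d → K) :
    v ᵥ* stepsMatrix (p :: l) = v ᵥ* Hstep K p.1 p.2 ᵥ* stepsMatrix l := by
  simp [stepsMatrix, vecMul_vecMul]

theorem vecMul_stepsMatrix_append (l₁ l₂ : List (K × (d → K))) (v : d → K) :
    v ᵥ* stepsMatrix (l₁ ++ l₂) = v ᵥ* stepsMatrix l₁ ᵥ* stepsMatrix l₂ := by
  simp [stepsMatrix, vecMul_vecMul]

theorem vecMul_stepsMatrix_flatMap_of_add {α σ : Type*} [AddMonoid σ] (e : σ → d → K)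
    (f : α → List (K × (d → K))) (g : α → σ) (h : ∀ a s, e s ᵥ* stepsMatrix (f a) = e (s + g a))
    (L : List α) (s : σ) : e s ᵥ* stepsMatrix (L.flatMap f) = e (s + (L.map g).sum) := by
  induction L generalizing s with
  | nil => simp
  | cons a L ih => rw [List.flatMap_cons, vecMul_stepsMatrix_append, h, ih, List.map_cons,
      List.sum_cons, add_assoc]

theorem vecMul_stepsMatrix_flatMap_of_update {ι β : Type*} [DecidableEq ι] (e : (ι → β) → d → K)
    (f : ι → List (K × (d → K))) (y : ι → β)
    (h : ∀ i s, e s ᵥ* stepsMatrix (f i) = e (update s i (y i))) (L : List ι) (s : ι → β) :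
    e s ᵥ* stepsMatrix (L.flatMap f) = e fun i => if i ∈ L then y i else s i := by
  induction L generalizing s with
  | nil => simp
  | cons a L ih =>
    rw [List.flatMap_cons, vecMul_stepsMatrix_append, h, ih]
    congr 1
    ext i
    by_cases hi : i = a <;> simp [hi]

theorem exists_ofFn_Hstep_prod_eq {m : ℕ} (l : List (K × (d → K))) (hl : l.length ≤ m) :
    ∃ (β : Fin m → K) (k : Fin m → d → K),
      (List.ofFn fun i => Hstep K (β i) (k i)).prod = stepsMatrix l := by
  set l' := l ++ List.replicate (m - l.length) ((0 : K), (0 : d → K))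
  have hlen : l'.length = m := by simp only [l', List.length_append, List.length_replicate]; omega
  refine ⟨fun i => (l'[i.cast hlen.symm]).1, fun i => (l'[i.cast hlen.symm]).2, ?_⟩
  have : stepsMatrix l' = stepsMatrix l := by
    simp [l', stepsMatrix, Hstep]
  rw [← this, stepsMatrix, ← List.ofFn_getElem_eq_map, List.ofFn_congr hlen]
  rfl

end CommRing

section Field

variable {K : Type*} [Field K] {d : Type*} [Fintype d] [DecidableEq d]

def scaleSteps (i : d) (c : K) : List (K × (d → K)) :=
  [(1 - c, Pi.single i 1)]

/-- If `v j = 0`, the two steps send `(v i, v j)` to `(0, -v i)` and then to `(v i, v i)`. -/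
def copySteps (i j : d) (c : K) : List (K × (d → K)) :=
  [(1, Pi.single i 1 + Pi.single j 1), (2⁻¹, Pi.single i 1 + Pi.single j 2)] ++ scaleSteps j c

/-- The two steps send `(v i, v j)` to `(-v j, -v i)` and then to
`(v i + v j, v j - v i / 2)`. -/
def flushSteps (i j : d) : List (K × (d → K)) :=
  [(1, Pi.single i 1 + Pi.single j 1), (2, Pi.single i 1 + Pi.single j 2⁻¹)] ++ scaleSteps j 0

def addSteps (p q t : d) (c : K) : List (K × (d → K)) :=
  copySteps p t c ++ flushSteps q t

theorem vecMul_stepsMatrix_scaleSteps (i : d) (c : K) (v : d → K) :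
    v ᵥ* stepsMatrix (scaleSteps i c) = update v i (c * v i) := by
  rw [scaleSteps, vecMul_stepsMatrix_cons, vecMul_stepsMatrix_nil, vecMul_Hstep]
  ext z
  by_cases hz : z = i
  · simp only [hz, dotProduct_single, mul_one, Pi.sub_apply, Pi.smul_apply, Pi.single_eq_same,
      smul_eq_mul, update_self]
    ring
  · simp [hz]

variable [NeZero (2 : K)]

theorem vecMul_stepsMatrix_copySteps {i j : d} (hij : i ≠ j) (c : K) {v : d → K} (hv : v j = 0) :
    v ᵥ* stepsMatrix (copySteps i j c) = update v j (c * v i) := by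
  rw [copySteps, vecMul_stepsMatrix_append, vecMul_stepsMatrix_scaleSteps,
    vecMul_stepsMatrix_cons, vecMul_stepsMatrix_cons, vecMul_stepsMatrix_nil,
    vecMul_Hstep, vecMul_Hstep]
  have h2 : (2 : K)⁻¹ * 2 = 1 := inv_mul_cancel₀ two_ne_zero
  ext z
  by_cases hz : z = j
  · subst hz
    simp only [dotProduct_add, dotProduct_single, mul_one, hv, add_zero, one_mul, smul_add,
      Pi.sub_apply, Pi.add_apply, Pi.smul_apply, Pi.single_eq_same, smul_eq_mul,
      Pi.single_eq_of_ne hij, Pi.single_eq_of_ne' hij, mul_zero, sub_self, zero_add, zero_sub,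
      neg_mul, mul_neg, neg_smul, Pi.neg_apply, neg_zero, sub_neg_eq_add, update_self]
    linear_combination 2 * c * v i * h2
  · by_cases hzi : z = i
    · simp only [hzi, dotProduct_add, dotProduct_single, mul_one, hv, add_zero, one_mul, smul_add,
        Pi.sub_apply, Pi.add_apply, Pi.smul_apply, Pi.single_eq_same, smul_eq_mul,
        Pi.single_eq_of_ne hij, Pi.single_eq_of_ne' hij, mul_zero, sub_self, zero_add, zero_sub,
        neg_mul, mul_neg, neg_smul, Pi.neg_apply, neg_zero, sub_neg_eq_add, update_of_ne hij]
      linear_combination v i * h2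
    · simp [hz, hzi, Pi.single_apply]

theorem vecMul_stepsMatrix_flushSteps {i j : d} (hij : i ≠ j) (v : d → K) :
    v ᵥ* stepsMatrix (flushSteps i j) = update (update v i (v i + v j)) j 0 := by
  rw [flushSteps, vecMul_stepsMatrix_append, vecMul_stepsMatrix_scaleSteps,
    vecMul_stepsMatrix_cons, vecMul_stepsMatrix_cons, vecMul_stepsMatrix_nil,
    vecMul_Hstep, vecMul_Hstep]
  have h2 : (2 : K) * 2⁻¹ = 1 := mul_inv_cancel₀ two_ne_zero
  ext z
  by_cases hz : z = j
  · simp [hz]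
  · by_cases hzi : z = i
    · simp only [hzi, dotProduct_add, dotProduct_single, mul_one, one_mul, smul_add, Pi.sub_apply,
        Pi.add_apply, Pi.smul_apply, Pi.single_eq_same, smul_eq_mul, Pi.single_eq_of_ne hij,
        Pi.single_eq_of_ne' hij, mul_zero, add_zero, zero_add, neg_mul, zero_mul,
        sub_add_cancel_left, sub_add_cancel_right, update_of_ne hij, update_self]
      linear_combination v i * h2
    · simp [hz, hzi, Pi.single_apply]

theorem vecMul_stepsMatrix_addSteps {p q t : d} (hpt : p ≠ t) (hqt : q ≠ t)
    (c : K) {v : d → K} (hv : v t = 0) :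
    v ᵥ* stepsMatrix (addSteps p q t c) = update v q (v q + c * v p) := by
  rw [addSteps, vecMul_stepsMatrix_append, vecMul_stepsMatrix_copySteps hpt c hv,
    vecMul_stepsMatrix_flushSteps hqt]
  ext z
  by_cases hz : z = t
  · simp [hz, hqt.symm, hv]
  · by_cases hzq : z = q
    · simp [hzq, hqt]
    · simp [hz, hzq]

end Field

section Blocks

variable {K : Type*} {n : ℕ}

/-- The row vector `[x | s | t]`. -/
def blockVec (x s : Fin n → K) (t : K) : (Fin n ⊕ Fin n) ⊕ Unit → K :=
  Sum.elim (Sum.elim x s) fun _ => t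

theorem update_blockVec_main (x s : Fin n → K) (t : K) (i : Fin n) (c : K) :
    update (blockVec x s t) (.inl (.inl i)) c = blockVec (update x i c) s t := by
  rw [blockVec, Sum.update_elim_inl, Sum.update_elim_inl, blockVec]

theorem update_blockVec_scratch (x s : Fin n → K) (t : K) (j : Fin n) (c : K) :
    update (blockVec x s t) (.inl (.inr j)) c = blockVec x (update s j c) t := by
  rw [blockVec, Sum.update_elim_inl, Sum.update_elim_inr, blockVec]

theorem update_blockVec_temp (x s : Fin n → K) (t c : K) :
    update (blockVec x s t) (.inr ()) c = blockVec x s c := by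
  rw [blockVec, Sum.update_elim_inr, blockVec, update_eq_const_of_subsingleton]
  rfl

variable [Field K]

variable (n) in
def clearScratchTempSteps : List (K × ((Fin n ⊕ Fin n) ⊕ Unit → K)) :=
  (List.finRange n).flatMap (fun j => scaleSteps (.inl (.inr j)) 0) ++ scaleSteps (.inr ()) 0

theorem vecMul_stepsMatrix_clearScratchTempSteps (x s : Fin n → K) (t : K) :
    blockVec x s t ᵥ* stepsMatrix (clearScratchTempSteps n) = blockVec x 0 0 := by
  rw [clearScratchTempSteps, vecMul_stepsMatrix_append,
    vecMul_stepsMatrix_flatMap_of_update (fun s => blockVec x s t) _ 0 fun j s => by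
      rw [vecMul_stepsMatrix_scaleSteps, zero_mul, update_blockVec_scratch]; rfl,
    vecMul_stepsMatrix_scaleSteps, zero_mul, update_blockVec_temp]
  simp only [List.mem_finRange, if_true]

def accumulateSteps (P : Matrix (Fin n) (Fin n) K) :
    List (K × ((Fin n ⊕ Fin n) ⊕ Unit → K)) :=
  (List.finRange n).flatMap fun j => (List.finRange n).flatMap fun i =>
    addSteps (.inl (.inl i)) (.inl (.inr j)) (.inr ()) (P i j)

variable (n) in
def moveScratchToMainSteps : List (K × ((Fin n ⊕ Fin n) ⊕ Unit → K)) :=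
  (List.finRange n).flatMap fun i =>
    scaleSteps (.inl (.inl i)) 0 ++ copySteps (.inl (.inr i)) (.inl (.inl i)) 1

def applyMatrixSteps (P : Matrix (Fin n) (Fin n) K) : List (K × ((Fin n ⊕ Fin n) ⊕ Unit → K)) :=
  clearScratchTempSteps n ++ accumulateSteps P ++ moveScratchToMainSteps n

theorem length_applyMatrixSteps (P : Matrix (Fin n) (Fin n) K) :
    (applyMatrixSteps P).length = 6 * n ^ 2 + 5 * n + 1 := by
  simp only [applyMatrixSteps, clearScratchTempSteps, accumulateSteps, moveScratchToMainSteps,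
    addSteps, copySteps, flushSteps, scaleSteps, List.length_append, List.length_flatMap,
    List.length_cons, List.length_nil, List.map_const', List.length_finRange, List.sum_replicate,
    smul_eq_mul]
  ring

variable [NeZero (2 : K)]

theorem vecMul_stepsMatrix_accumulateSteps (P : Matrix (Fin n) (Fin n) K) (x s : Fin n → K) :
    blockVec x s 0 ᵥ* stepsMatrix (accumulateSteps P) = blockVec x (s + x ᵥ* P) 0 := by
  have add_entry (i j : Fin n) (s : Fin n → K) :
      blockVec x s 0 ᵥ* stepsMatrix (addSteps (.inl (.inl i)) (.inl (.inr j)) (.inr ()) (P i j)) =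
        blockVec x (s + Pi.single j (x i * P i j)) 0 := by
    rw [vecMul_stepsMatrix_addSteps Sum.inl_ne_inr Sum.inl_ne_inr _ rfl, update_blockVec_scratch]
    congr 1
    ext j'
    by_cases h : j' = j <;> simp [h, blockVec, mul_comm]
  rw [accumulateSteps, vecMul_stepsMatrix_flatMap_of_add (fun s => blockVec x s 0) _ _ fun j s => by
    rw [vecMul_stepsMatrix_flatMap_of_add (fun s => blockVec x s 0) _ _ fun i s => add_entry i j s]]
  simp_rw [← Fin.sum_univ_def]
  congr 2
  ext j
  simp [Finset.sum_apply, Pi.single_apply, vecMul, dotProduct]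

theorem vecMul_stepsMatrix_moveScratchToMainSteps (x y : Fin n → K) :
    blockVec x y 0 ᵥ* stepsMatrix (moveScratchToMainSteps n) = blockVec y y 0 := by
  rw [moveScratchToMainSteps,
    vecMul_stepsMatrix_flatMap_of_update (fun x => blockVec x y 0) _ y fun i x => by
    rw [vecMul_stepsMatrix_append, vecMul_stepsMatrix_scaleSteps, zero_mul, update_blockVec_main,
      vecMul_stepsMatrix_copySteps (Sum.inl_injective.ne Sum.inr_ne_inl) 1 (update_self i 0 x),
      update_blockVec_main, update_idem, one_mul]
    rfl]
  simp only [List.mem_finRange, if_true]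

theorem vecMul_stepsMatrix_applyMatrixSteps (P : Matrix (Fin n) (Fin n) K) (x s : Fin n → K) (t : K) :
    blockVec x s t ᵥ* stepsMatrix (applyMatrixSteps P) = blockVec (x ᵥ* P) (x ᵥ* P) 0 := by
  rw [applyMatrixSteps, vecMul_stepsMatrix_append, vecMul_stepsMatrix_append,
    vecMul_stepsMatrix_clearScratchTempSteps, vecMul_stepsMatrix_accumulateSteps, zero_add,
    vecMul_stepsMatrix_moveScratchToMainSteps]

end Blocks

end DeltaNet

theorem apply_matrix_with_Hsteps_general {n : ℕ}
    (P : Matrix (Fin n) (Fin n) ℚ) :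
    ∃ (β : Fin (8 * n ^ 2 + 5 * n + 1) → ℚ)
      (k : Fin (8 * n ^ 2 + 5 * n + 1) → ((Fin n ⊕ Fin n) ⊕ Unit) → ℚ),
      ∀ (x s : Fin n → ℚ) (t : ℚ),
        Matrix.vecMul (Sum.elim (Sum.elim x s) fun _ => t)
            (List.ofFn fun i => Hstep ℚ (β i) (k i)).prod =
          Sum.elim (Sum.elim (Matrix.vecMul x P) (Matrix.vecMul x P)) fun _ => 0 := by
  obtain ⟨β, k, hprod⟩ := DeltaNet.exists_ofFn_Hstep_prod_eq (m := 8 * n ^ 2 + 5 * n + 1)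
    (DeltaNet.applyMatrixSteps P)
    (by rw [DeltaNet.length_applyMatrixSteps]; nlinarith)
  exact ⟨β, k, fun x s t => hprod ▸ DeltaNet.vecMul_stepsMatrix_applyMatrixSteps P x s t⟩

/-- any `n×n` matrix `P` over `ℚ` can be applied to a row vector
`[x | s | t]` in dimension `2n+1` (main `x`, scratch `s`, temp `t`) using
`m = 8n² + 5n + 1` multiplicative DeltaNet steps, producing `[xP | xP | 0]`. -/
theorem apply_matrix_with_Hsteps {n : ℕ} (hn : 1 ≤ n)
    (P : Matrix (Fin n) (Fin n) ℚ) :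
    ∃ (β : Fin (8 * n ^ 2 + 5 * n + 1) → ℚ)
      (k : Fin (8 * n ^ 2 + 5 * n + 1) → ((Fin n ⊕ Fin n) ⊕ Unit) → ℚ),
      ∀ (x s : Fin n → ℚ) (t : ℚ),
        Matrix.vecMul (Sum.elim (Sum.elim x s) fun _ => t)
            (List.ofFn fun i => Hstep ℚ (β i) (k i)).prod =
          Sum.elim (Sum.elim (Matrix.vecMul x P) (Matrix.vecMul x P)) fun _ => 0 :=
  apply_matrix_with_Hsteps_general P
end

section
/- Let n ≥ 1, m ≥ 1. Let E be an edge relation on vertices V = {1,…,n} that is deterministic (for every i there is at most one j with E i j), such that the set of edges {(i,j) : E i j} is finite with cardinality m, and such that the vertex n has no outgoing edge. Define a directed graph G′ on the vertex set ({0,…,m} × V) ∪ {v_F} (where v_F is a fresh vertex) with edge relation E′ given by: E′ ((h,i), (h+1,j)) for every edge E i j and every h ∈ {0,…,m−1}, and E′ ((h,n), v_F) for every h ∈ {0,…,m}. Then for every s ∈ V: the vertex n is reachable from s via the reflexive-transitive closure of E if and only if v_F is reachable from (0,s) via the reflexive-transitive closure of E′. -/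
/-!
A shortest path from `s` to the target never revisits a vertex, so its edges have pairwise
distinct sources and it has at most `m` steps. Such a path is copied into the layered graph one
layer per step, starting in layer `0`; it reaches the target in a layer `k ≤ m`, from where `v_F`
is one step away. Conversely, every edge of the layered graph into the layers projects to an edge
of `E`, and `v_F` is entered only from copies of the target.
-/

open Relation Finset

variable {α : Type*} {r : α → α → Prop}

inductive ReachWithin (r : α → α → Prop) : ℕ → α → α → Prop
  | refl (k : ℕ) (a : α) : ReachWithin r k a a
  | head {k : ℕ} {a b c : α} : r a b → ReachWithin r k b c → ReachWithin r (k + 1) a c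

/-- Cut a path from `a` at its last visit to `a`. -/
theorem Relation.ReflTransGen.eq_or_exists_step_then_avoiding {a b : α}
    (h : ReflTransGen r a b) :
    a = b ∨ ∃ c, r a c ∧ ReflTransGen (fun x y => x ≠ a ∧ r x y) c b := by
  induction h with
  | refl => exact .inl rfl
  | @tail d e _ hde ih =>
    by_cases hda : d = a
    · exact .inr ⟨e, hda ▸ hde, .refl⟩
    · rcases ih with rfl | ⟨c, hac, hcd⟩
      · exact absurd rfl hda
      · exact .inr ⟨c, hac, hcd.tail ⟨hda, hde⟩⟩

theorem reachWithin_card_of_reflTransGen_sourcesIn [DecidableEq α] (S : Finset α) {a b : α}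
    (h : ReflTransGen (fun x y => x ∈ S ∧ r x y) a b) : ReachWithin r #S a b := by
  induction S using Finset.strongInduction generalizing a with
  | H S ih =>
    rcases h.eq_or_exists_step_then_avoiding with rfl | ⟨c, ⟨haS, hac⟩, hcb⟩
    · exact .refl _ _
    · have hcb' : ReflTransGen (fun x y => x ∈ S.erase a ∧ r x y) c b :=
        ReflTransGen.mono (fun x y ⟨hxa, hxS, hxy⟩ => ⟨mem_erase.2 ⟨hxa, hxS⟩, hxy⟩) _ _
          hcb
      rw [← card_erase_add_one haS]
      exact .head hac (ih _ (erase_ssubset haS) hcb')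

theorem reachWithin_ncard_sources_of_reflTransGen [Finite α] {a b : α}
    (h : ReflTransGen r a b) : ReachWithin r {x | ∃ y, r x y}.ncard a b := by
  classical
  rw [Set.ncard_eq_toFinset_card _ (Set.toFinite _)]
  refine reachWithin_card_of_reflTransGen_sourcesIn _
    (ReflTransGen.mono (fun x y hxy => ⟨?_, hxy⟩) _ _ h)
  simpa using ⟨y, hxy⟩

theorem ncard_sources_le_ncard_edges (hfin : {p : α × α | r p.1 p.2}.Finite) :
    {x | ∃ y, r x y}.ncard ≤ {p : α × α | r p.1 p.2}.ncard := by
  have hsrc : {x | ∃ y, r x y} = Prod.fst '' {p : α × α | r p.1 p.2} := by ext; simp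
  rw [hsrc]
  exact Set.ncard_image_le hfin

def layeredRel (r : α → α → Prop) (m : ℕ) (t : α) :
    (Fin (m + 1) × α) ⊕ Unit → (Fin (m + 1) × α) ⊕ Unit → Prop := fun a b =>
  (∃ (h : Fin m) (i j : α), r i j ∧
      a = Sum.inl (h.castSucc, i) ∧ b = Sum.inl (h.succ, j)) ∨
    ∃ h : Fin (m + 1), a = Sum.inl (h, t) ∧ b = Sum.inr ()

theorem reflTransGen_layeredRel_of_reachWithin {m k : ℕ} {i t : α} (hk : ReachWithin r k i t)
    (h : Fin (m + 1)) (hhk : (h : ℕ) + k ≤ m) :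
    ReflTransGen (layeredRel r m t) (Sum.inl (h, i)) (Sum.inr ()) := by
  induction hk generalizing h with
  | refl => exact .single (.inr ⟨h, rfl, rfl⟩)
  | @head k i j t hij _ ih =>
    let h' : Fin m := ⟨h, by omega⟩
    exact .head (.inl ⟨h', i, j, hij, rfl, rfl⟩) (ih h'.succ (by simp [h']; omega))

theorem reflTransGen_of_reflTransGen_layeredRel {m : ℕ} {t : α} {h : Fin (m + 1)} {i : α}
    (hr : ReflTransGen (layeredRel r m t) (Sum.inl (h, i)) (Sum.inr ())) :
    ReflTransGen r i t := by
  generalize hx : (Sum.inl (h, i) : (Fin (m + 1) × α) ⊕ Unit) = x at hr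
  induction hr using ReflTransGen.head_induction_on generalizing h i with
  | refl => cases hx
  | head hstep _ ih =>
    subst hx
    rcases hstep with ⟨h', i', j, hij, hi, rfl⟩ | ⟨h', hi, -⟩
    · cases hi
      exact .head hij (ih rfl)
    · cases hi
      exact .refl

theorem layered_reduction_correct_general (n m : ℕ)
    (E : Fin n → Fin n → Prop)
    (hcard : {p : Fin n × Fin n | E p.1 p.2}.ncard = m)
    (vlast : Fin n)
    (E' : ((Fin (m + 1) × Fin n) ⊕ Unit) → ((Fin (m + 1) × Fin n) ⊕ Unit) → Prop)
    (hE' : ∀ a b, E' a b ↔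
      ((∃ (h : Fin m) (i j : Fin n), E i j ∧
          a = Sum.inl (h.castSucc, i) ∧ b = Sum.inl (h.succ, j)) ∨
        (∃ h : Fin (m + 1), a = Sum.inl (h, vlast) ∧ b = Sum.inr ())))
    (s : Fin n) :
    Relation.ReflTransGen E s vlast ↔
      Relation.ReflTransGen E' (Sum.inl ((0 : Fin (m + 1)), s)) (Sum.inr ()) := by
  obtain rfl : E' = layeredRel E m vlast := by
    funext a b
    exact propext (hE' a b)
  refine ⟨fun hreach => ?_, reflTransGen_of_reflTransGen_layeredRel⟩
  have hsteps : {x | ∃ y, E x y}.ncard ≤ m :=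
    hcard ▸ ncard_sources_le_ncard_edges (Set.toFinite _)
  exact reflTransGen_layeredRel_of_reachWithin
    (reachWithin_ncard_sources_of_reflTransGen hreach) 0 (by simpa using hsteps)

/-- correctness of the layered-graph reduction.  Let `E` be a
deterministic edge relation on vertices `Fin n` (vertex `n` of the paper being
the last element `vlast`), with exactly `m` edges and no outgoing edge at
`vlast`.  The layered graph `G′` has vertices `(Fin (m+1) × Fin n) ⊕ Unit`
(the extra `Unit` vertex is `v_F`), an edge from `(h, i)` to `(h+1, j)` for each
edge `E i j` and each `h ∈ {0,…,m−1}`, and an edge from `(h, vlast)` to `v_F`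
for each `h ∈ {0,…,m}`.  Then `vlast` is reachable from `s` in `E` iff `v_F`
is reachable from `(0, s)` in `E′`. -/
theorem layered_reduction_correct (n m : ℕ) (hn : 1 ≤ n) (hm : 1 ≤ m)
    (E : Fin n → Fin n → Prop)
    (hdet : ∀ i j j', E i j → E i j' → j = j')
    (hcard : {p : Fin n × Fin n | E p.1 p.2}.ncard = m)
    (vlast : Fin n) (hvlast : (vlast : ℕ) = n - 1)
    (hnoout : ∀ j, ¬ E vlast j)
    (E' : ((Fin (m + 1) × Fin n) ⊕ Unit) → ((Fin (m + 1) × Fin n) ⊕ Unit) → Prop)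
    (hE' : ∀ a b, E' a b ↔
      ((∃ (h : Fin m) (i j : Fin n), E i j ∧
          a = Sum.inl (h.castSucc, i) ∧ b = Sum.inl (h.succ, j)) ∨
        (∃ h : Fin (m + 1), a = Sum.inl (h, vlast) ∧ b = Sum.inr ())))
    (s : Fin n) :
    Relation.ReflTransGen E s vlast ↔
      Relation.ReflTransGen E' (Sum.inl ((0 : Fin (m + 1)), s)) (Sum.inr ()) :=
  layered_reduction_correct_general n m E hcard vlast E' hE' s
end
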